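/- Let Y_L > 0, C > 0, ω₀ ∈ ℝ, and define Ǎ = [[−Y_L/C, ω₀], [−ω₀, −Y_L/C]] ∈ ℝ^{2×2} and B̌ = (1/C)·I₂ (the load input being the negated net injected current). Then with P̌ = (C/2)·I₂, ρ̌ = Y_L, and ν̌ = 0: P̌ is symmetric positive definite, P̌Ǎ + (P̌Ǎ)ᵀ = −Y_L·I₂, −P̌B̌ + (1/2)·I₂ = 0, and the 4×4 block matrix [[−(P̌Ǎ + (P̌Ǎ)ᵀ) − ρ̌·I₂, −P̌B̌ + (1/2)·I₂], [(−P̌B̌ + (1/2)·I₂)ᵀ, −ν̌·I₂]] equals the zero matrix and is in particular positive semidefinite. -/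

import Mathlib

open Matrix

/- The Lyapunov candidate `P̌ = (C/2)·I` is a positive multiple of the identity, so `P̌Ǎ + (P̌Ǎ)ᵀ`
is `C/2` times the symmetric part of `Ǎ`. The rotation `ω₀` is skew and drops out, leaving
`−Y_L·I`, which the choice `ρ̌ = Y_L` cancels exactly; `P̌B̌ = I/2` cancels the off-diagonal
blocks. The dissipation matrix is therefore zero, hence positive semidefinite. -/

section

variable {n R : Type*} [DecidableEq n]

theorem smul_one_mul_add_transpose [Fintype n] [CommRing R] (c : R) (A : Matrix n n R) :
    c • (1 : Matrix n n R) * A + (c • (1 : Matrix n n R) * A)ᵀ = c • (A + Aᵀ) := by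
  rw [smul_mul, one_mul, transpose_smul, smul_add]

theorem neg_smul_one_mul_smul_one_add_eq_zero [Fintype n] [CommRing R] {c d e : R}
    (h : c * d = e) :
    -(c • (1 : Matrix n n R) * d • (1 : Matrix n n R)) + e • (1 : Matrix n n R) = 0 := by
  rw [smul_mul, one_mul, smul_smul, h, neg_add_cancel]

theorem fromBlocks_neg_sub_smul_one_eq_zero [CommRing R] {S X : Matrix n n R} {ρ : R}
    (hS : S = (-ρ) • 1) (hX : X = 0) :
    fromBlocks (-S - ρ • 1) X Xᵀ (-(0 : R) • (1 : Matrix n n R)) = 0 := by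
  rw [hS, hX, neg_smul, neg_neg, sub_self, transpose_zero, neg_zero, zero_smul, fromBlocks_zero]

end

theorem add_transpose_fin_two_rotation {R : Type*} [CommRing R] (a b : R) :
    !![a, b; -b, a] + !![a, b; -b, a]ᵀ = (2 * a) • (1 : Matrix (Fin 2) (Fin 2) R) := by
  ext i j
  fin_cases i <;> fin_cases j <;> simp [two_mul]

theorem load_passivity_feasibility_general (YL C ω₀ : ℝ) (hC : 0 < C)
    (Acheck : Matrix (Fin 2) (Fin 2) ℝ) (hA : Acheck = !![-YL / C, ω₀; -ω₀, -YL / C])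
    (Bcheck : Matrix (Fin 2) (Fin 2) ℝ) (hB : Bcheck = (1 / C) • (1 : Matrix (Fin 2) (Fin 2) ℝ))
    (Pcheck : Matrix (Fin 2) (Fin 2) ℝ) (hP : Pcheck = (C / 2) • (1 : Matrix (Fin 2) (Fin 2) ℝ))
    (ρcheck νcheck : ℝ) (hρ : ρcheck = YL) (hν : νcheck = 0) :
    Pcheck.IsSymm ∧ Pcheck.PosDef ∧
    Pcheck * Acheck + (Pcheck * Acheck)ᵀ = (-YL) • (1 : Matrix (Fin 2) (Fin 2) ℝ) ∧
    -(Pcheck * Bcheck) + (1 / 2 : ℝ) • (1 : Matrix (Fin 2) (Fin 2) ℝ) = 0 ∧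
    Matrix.fromBlocks
        (-(Pcheck * Acheck + (Pcheck * Acheck)ᵀ) - ρcheck • (1 : Matrix (Fin 2) (Fin 2) ℝ))
        (-(Pcheck * Bcheck) + (1 / 2 : ℝ) • (1 : Matrix (Fin 2) (Fin 2) ℝ))
        (-(Pcheck * Bcheck) + (1 / 2 : ℝ) • (1 : Matrix (Fin 2) (Fin 2) ℝ))ᵀ
        (-νcheck • (1 : Matrix (Fin 2) (Fin 2) ℝ)) = 0 ∧
    (Matrix.fromBlocks
        (-(Pcheck * Acheck + (Pcheck * Acheck)ᵀ) - ρcheck • (1 : Matrix (Fin 2) (Fin 2) ℝ))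
        (-(Pcheck * Bcheck) + (1 / 2 : ℝ) • (1 : Matrix (Fin 2) (Fin 2) ℝ))
        (-(Pcheck * Bcheck) + (1 / 2 : ℝ) • (1 : Matrix (Fin 2) (Fin 2) ℝ))ᵀ
        (-νcheck • (1 : Matrix (Fin 2) (Fin 2) ℝ))).PosSemidef := by
  subst hA hB hP ρcheck hν
  have hPos : ((C / 2) • (1 : Matrix (Fin 2) (Fin 2) ℝ)).PosDef := PosDef.one.smul (by positivity)
  have hLyap : (C / 2) • (1 : Matrix (Fin 2) (Fin 2) ℝ) * !![-YL / C, ω₀; -ω₀, -YL / C] +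
      ((C / 2) • (1 : Matrix (Fin 2) (Fin 2) ℝ) * !![-YL / C, ω₀; -ω₀, -YL / C])ᵀ =
      (-YL) • (1 : Matrix (Fin 2) (Fin 2) ℝ) := by
    rw [smul_one_mul_add_transpose, add_transpose_fin_two_rotation, smul_smul]
    congr 1
    field_simp
  have hCross :
      -((C / 2) • (1 : Matrix (Fin 2) (Fin 2) ℝ) * (1 / C) • (1 : Matrix (Fin 2) (Fin 2) ℝ)) +
      (1 / 2 : ℝ) • (1 : Matrix (Fin 2) (Fin 2) ℝ) = 0 :=
    neg_smul_one_mul_smul_one_add_eq_zero (by field_simp)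
  have hBlocks := fromBlocks_neg_sub_smul_one_eq_zero hLyap hCross
  exact ⟨hPos.isHermitian, hPos, hLyap, hCross, hBlocks, hBlocks ▸ PosSemidef.zero⟩

theorem load_passivity_feasibility (YL C ω₀ : ℝ) (hYL : 0 < YL) (hC : 0 < C)
    (Acheck : Matrix (Fin 2) (Fin 2) ℝ) (hA : Acheck = !![-YL / C, ω₀; -ω₀, -YL / C])
    (Bcheck : Matrix (Fin 2) (Fin 2) ℝ) (hB : Bcheck = (1 / C) • (1 : Matrix (Fin 2) (Fin 2) ℝ))
    (Pcheck : Matrix (Fin 2) (Fin 2) ℝ) (hP : Pcheck = (C / 2) • (1 : Matrix (Fin 2) (Fin 2) ℝ))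
    (ρcheck νcheck : ℝ) (hρ : ρcheck = YL) (hν : νcheck = 0) :
    Pcheck.IsSymm ∧ Pcheck.PosDef ∧
    Pcheck * Acheck + (Pcheck * Acheck)ᵀ = (-YL) • (1 : Matrix (Fin 2) (Fin 2) ℝ) ∧
    -(Pcheck * Bcheck) + (1 / 2 : ℝ) • (1 : Matrix (Fin 2) (Fin 2) ℝ) = 0 ∧
    Matrix.fromBlocks
        (-(Pcheck * Acheck + (Pcheck * Acheck)ᵀ) - ρcheck • (1 : Matrix (Fin 2) (Fin 2) ℝ))
        (-(Pcheck * Bcheck) + (1 / 2 : ℝ) • (1 : Matrix (Fin 2) (Fin 2) ℝ))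
        (-(Pcheck * Bcheck) + (1 / 2 : ℝ) • (1 : Matrix (Fin 2) (Fin 2) ℝ))ᵀ
        (-νcheck • (1 : Matrix (Fin 2) (Fin 2) ℝ)) = 0 ∧
    (Matrix.fromBlocks
        (-(Pcheck * Acheck + (Pcheck * Acheck)ᵀ) - ρcheck • (1 : Matrix (Fin 2) (Fin 2) ℝ))
        (-(Pcheck * Bcheck) + (1 / 2 : ℝ) • (1 : Matrix (Fin 2) (Fin 2) ℝ))
        (-(Pcheck * Bcheck) + (1 / 2 : ℝ) • (1 : Matrix (Fin 2) (Fin 2) ℝ))ᵀ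
        (-νcheck • (1 : Matrix (Fin 2) (Fin 2) ℝ))).PosSemidef :=
  load_passivity_feasibility_general YL C ω₀ hC Acheck hA Bcheck hB Pcheck hP ρcheck νcheck hρ hν
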